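/- Let (P, Ω) be a poset with an ℝ-flow, let F be an intersection-closed family of intervals in P that is closed under the action of Ω, let ε ≥ 0, and let I, J ∈ F. If I is 4ε-significant and the ordered pair (C(I), C(J)) is left ε-interleaved, then C(I) and C(J) are ε-interleaved. -/

import Mathlib

open CategoryTheory
open scoped Classical ENNReal NNReal

set_option linter.unusedSectionVars false
set_option linter.unusedVariables false

/-! ## Posets, intervals, flows -/

variable {P : Type} [PartialOrder P]

/-- A subset of a poset is poset-convex if it contains every point between two of its points. -/
def PosetConvex (I : Set P) : Prop :=
  ∀ ⦃p q r : P⦄, p ∈ I → q ∈ I → p ≤ r → r ≤ q → r ∈ I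

/-- A subset of a poset is poset-connected if any two of its points are joined by a
zigzag path inside the subset. -/
def PosetConnected (I : Set P) : Prop :=
  ∀ p ∈ I, ∀ q ∈ I,
    Relation.ReflTransGen (fun a b => b ∈ I ∧ (a ≤ b ∨ b ≤ a)) p q

/-- An interval in a poset is a poset-convex and poset-connected subset. -/
def IsInterval (I : Set P) : Prop := PosetConvex I ∧ PosetConnected I

/-- `Q` is a poset-connected component of `U`: a poset-connected subset of `U`, maximal with
respect to inclusion among poset-connected subsets of `U`. -/
def IsPosetComponent (U Q : Set P) : Prop :=
  Q ⊆ U ∧ PosetConnected Q ∧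
    ∀ Q' : Set P, Q' ⊆ U → PosetConnected Q' → Q ⊆ Q' → Q' = Q

/-- A subset `Q` of `I ∩ J` is `(I,J)`-valid. -/
def IsValid (I J Q : Set P) : Prop :=
  ∀ p ∈ Q, (∀ q ∈ I, q ≤ p → q ∈ J) ∧ (∀ r ∈ J, p ≤ r → r ∈ I)

/-- An `ℝ`-flow on a poset. -/
structure RFlow (P : Type) [PartialOrder P] where
  Ω : ℝ → P → P
  mono : ∀ t : ℝ, Monotone (Ω t)
  mono_param : ∀ {t s : ℝ}, t ≤ s → ∀ p : P, Ω t p ≤ Ω s p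
  add : ∀ t s : ℝ, ∀ p : P, Ω (t + s) p = Ω t (Ω s p)
  zero : ∀ p : P, Ω 0 p = p

/-- The `t`-shift `I(t)` of a subset of a poset with an `ℝ`-flow. -/
def RFlow.shiftSet (Φ : RFlow P) (I : Set P) (t : ℝ) : Set P := {p : P | Φ.Ω t p ∈ I}

lemma RFlow.self_le (Φ : RFlow P) {t : ℝ} (ht : 0 ≤ t) (p : P) : p ≤ Φ.Ω t p := by
  have h := Φ.mono_param ht p
  rwa [Φ.zero] at h

lemma RFlow.self_le_twice (Φ : RFlow P) {t : ℝ} (ht : 0 ≤ t) (p : P) :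
    p ≤ Φ.Ω t (Φ.Ω t p) :=
  (Φ.self_le ht p).trans (Φ.self_le ht _)

lemma RFlow.omega_neg_omega (Φ : RFlow P) (t : ℝ) (p : P) : Φ.Ω (-t) (Φ.Ω t p) = p := by
  have h := Φ.add (-t) t p
  rw [neg_add_cancel, Φ.zero] at h
  exact h.symm

lemma RFlow.omega_omega_neg (Φ : RFlow P) (t : ℝ) (p : P) : Φ.Ω t (Φ.Ω (-t) p) = p := by
  have h := Φ.add t (-t) p
  rw [add_neg_cancel, Φ.zero] at h
  exact h.symm

lemma RFlow.posetConvex_shiftSet (Φ : RFlow P) {I : Set P} (hI : PosetConvex I) (t : ℝ) :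
    PosetConvex (Φ.shiftSet I t) := by
  intro p q r hp hq hpr hrq
  exact hI hp hq (Φ.mono t hpr) (Φ.mono t hrq)

lemma RFlow.posetConnected_shiftSet (Φ : RFlow P) {I : Set P} (hI : PosetConnected I) (t : ℝ) :
    PosetConnected (Φ.shiftSet I t) := by
  intro p hp q hq
  have h := hI _ hp _ hq
  have hstep : ∀ a b : P, (b ∈ I ∧ (a ≤ b ∨ b ≤ a)) →
      (Φ.Ω (-t) b ∈ Φ.shiftSet I t ∧ (Φ.Ω (-t) a ≤ Φ.Ω (-t) b ∨ Φ.Ω (-t) b ≤ Φ.Ω (-t) a)) :=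
    fun a b hab => ⟨show Φ.Ω t (Φ.Ω (-t) b) ∈ I by rw [Φ.omega_omega_neg]; exact hab.1,
      hab.2.imp (fun h' => Φ.mono (-t) h') (fun h' => Φ.mono (-t) h')⟩
  have h2 := Relation.ReflTransGen.lift
    (p := fun a b : P => b ∈ Φ.shiftSet I t ∧ (a ≤ b ∨ b ≤ a)) (fun x : P => Φ.Ω (-t) x)
    hstep _ _ h
  simpa only [Function.onFun, Φ.omega_neg_omega] using h2

lemma RFlow.isInterval_shiftSet (Φ : RFlow P) {I : Set P} (hI : IsInterval I) (t : ℝ) :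
    IsInterval (Φ.shiftSet I t) :=
  ⟨Φ.posetConvex_shiftSet hI.1 t, Φ.posetConnected_shiftSet hI.2 t⟩

lemma RFlow.shiftSet_nonempty (Φ : RFlow P) {I : Set P} (hI : I.Nonempty) (t : ℝ) :
    (Φ.shiftSet I t).Nonempty := by
  obtain ⟨x, hx⟩ := hI
  exact ⟨Φ.Ω (-t) x, show Φ.Ω t (Φ.Ω (-t) x) ∈ I by rw [Φ.omega_omega_neg]; exact hx⟩

/-! ## Characteristic (interval) persistence modules -/

variable (K : Type) [Field K]

/-- The pointwise value of the characteristic module of `I`, as a submodule of `K`. -/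
noncomputable def charSub (I : Set P) (p : P) : Submodule K K :=
  if p ∈ I then ⊤ else ⊥

lemma charSub_eq_top {I : Set P} {p : P} (hp : p ∈ I) : charSub K I p = ⊤ := if_pos hp

lemma charSub_eq_bot {I : Set P} {p : P} (hp : p ∉ I) : charSub K I p = ⊥ := if_neg hp

lemma charElt_eq_zero {I : Set P} {p : P} (hp : p ∉ I) (x : ↥(charSub K I p)) : x = 0 := by
  exact Subtype.ext ((Submodule.eq_bot_iff _).mp (charSub_eq_bot K hp) (x : K) x.2)

/-- The structure maps of the characteristic module of `I`. -/
noncomputable def charMap (I : Set P) (p q : P) :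
    ↥(charSub K I p) →ₗ[K] ↥(charSub K I q) :=
  if h : p ∈ I ∧ q ∈ I then
    { toFun := fun x => ⟨(x : K), by rw [charSub_eq_top K h.2]; exact Submodule.mem_top⟩
      map_add' := fun x y => rfl
      map_smul' := fun c x => rfl }
  else 0

lemma charMap_id (I : Set P) (p : P) : charMap K I p p = LinearMap.id := by
  by_cases hp : p ∈ I
  · simp only [charMap, dif_pos (And.intro hp hp)]
    rfl
  · ext x
    rw [charElt_eq_zero K hp x]
    simp

lemma charMap_comp {I : Set P} (hI : PosetConvex I) {p q r : P} (hpq : p ≤ q) (hqr : q ≤ r) :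
    (charMap K I q r).comp (charMap K I p q) = charMap K I p r := by
  by_cases hp : p ∈ I
  · by_cases hr : r ∈ I
    · have hq : q ∈ I := hI hp hr hpq hqr
      ext x
      simp only [charMap, dif_pos (And.intro hp hq), dif_pos (And.intro hq hr),
        dif_pos (And.intro hp hr), LinearMap.comp_apply, LinearMap.coe_mk, AddHom.coe_mk]
    · ext x
      exact congrArg Subtype.val
        ((charElt_eq_zero K hr ((charMap K I q r).comp (charMap K I p q) x)).trans
          (charElt_eq_zero K hr (charMap K I p r x)).symm)
  · ext x
    rw [charElt_eq_zero K hp x]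
    simp

/-- The characteristic persistence module `C(I)` of a poset-convex subset `I`. -/
noncomputable def charMod (I : Set P) (hI : PosetConvex I) : P ⥤ ModuleCat K where
  obj p := ModuleCat.of K ↥(charSub K I p)
  map {p q} h := ModuleCat.ofHom (charMap K I p q)
  map_id p := by rw [charMap_id K I p]; rfl
  map_comp {p q r} h1 h2 := by
    rw [← charMap_comp K hI (leOfHom h1) (leOfHom h2)]; rfl

/-- The zero persistence module, realized as the characteristic module of the empty interval. -/
noncomputable def zeroPMod : P ⥤ ModuleCat K :=
  charMod K (∅ : Set P) (fun _ _ _ hp _ _ _ => absurd hp (Set.notMem_empty _))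

/-! ## Barcodes and interval-decomposable modules -/

/-- A barcode over a poset: a multiset of nonempty intervals, encoded as an indexed family. -/
structure Barcode (P : Type) [PartialOrder P] where
  ι : Type
  B : ι → Set P
  interval : ∀ a : ι, IsInterval (B a)
  nonempty : ∀ a : ι, (B a).Nonempty

/-- The interval-decomposable module `⊕_{a} C(B a)` associated to a barcode. -/
noncomputable def bcMod (D : Barcode P) : P ⥤ ModuleCat K where
  obj p := ModuleCat.of K (Π₀ a : D.ι, ↥(charSub K (D.B a) p))
  map {p q} h := ModuleCat.ofHom (DFinsupp.mapRange.linearMap (fun a => charMap K (D.B a) p q))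
  map_id p := by
    have h : (fun a : D.ι => charMap K (D.B a) p p)
        = fun a : D.ι => (LinearMap.id : ↥(charSub K (D.B a) p) →ₗ[K] ↥(charSub K (D.B a) p)) := by
      funext a; exact charMap_id K (D.B a) p
    show ModuleCat.ofHom (DFinsupp.mapRange.linearMap (fun a => charMap K (D.B a) p p)) = _
    rw [h, DFinsupp.mapRange.linearMap_id]
    rfl
  map_comp {p q r} h1 h2 := by
    have h : (fun a : D.ι => charMap K (D.B a) p r)
        = fun a : D.ι => (charMap K (D.B a) q r).comp (charMap K (D.B a) p q) := by
      funext a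
      exact (charMap_comp K (D.interval a).1 (leOfHom h1) (leOfHom h2)).symm
    show ModuleCat.ofHom (DFinsupp.mapRange.linearMap (fun a => charMap K (D.B a) p r)) = _
    rw [h, DFinsupp.mapRange.linearMap_comp]
    rfl

/-- `M` is interval-decomposable with barcode `D`. -/
def IsDecompositionOf (D : Barcode P) (M : P ⥤ ModuleCat K) : Prop :=
  Nonempty (M ≅ bcMod K D)

/-- The shift of a barcode along a flow. -/
noncomputable def Barcode.shift (D : Barcode P) (Φ : RFlow P) (t : ℝ) : Barcode P where
  ι := D.ι
  B a := Φ.shiftSet (D.B a) t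
  interval a := Φ.isInterval_shiftSet (D.interval a) t
  nonempty a := Φ.shiftSet_nonempty (D.nonempty a) t

/-! ## Shifts of modules, interleavings, distances -/

/-- The shift `M(t)` of a persistence module along a flow. -/
noncomputable def Pshift (Φ : RFlow P) (t : ℝ) (M : P ⥤ ModuleCat K) : P ⥤ ModuleCat K :=
  (Φ.mono t).functor ⋙ M

/-- The ordered pair `(M, N)` is left `ε`-interleaved. -/
noncomputable def LeftInterleaved (Φ : RFlow P) {ε : ℝ} (hε : 0 ≤ ε)
    (M N : P ⥤ ModuleCat K) : Prop :=
  ∃ (f : M ⟶ Pshift K Φ ε N) (g : N ⟶ Pshift K Φ ε M),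
    ∀ p : P, f.app p ≫ g.app (Φ.Ω ε p) = M.map (homOfLE (Φ.self_le_twice hε p))

/-- `M` and `N` are `ε`-interleaved. -/
noncomputable def Interleaved (Φ : RFlow P) {ε : ℝ} (hε : 0 ≤ ε)
    (M N : P ⥤ ModuleCat K) : Prop :=
  ∃ (f : M ⟶ Pshift K Φ ε N) (g : N ⟶ Pshift K Φ ε M),
    (∀ p : P, f.app p ≫ g.app (Φ.Ω ε p) = M.map (homOfLE (Φ.self_le_twice hε p))) ∧
    (∀ p : P, g.app p ≫ f.app (Φ.Ω ε p) = N.map (homOfLE (Φ.self_le_twice hε p)))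

/-- The interleaving distance between two persistence modules. -/
noncomputable def dI (Φ : RFlow P) (M N : P ⥤ ModuleCat K) : ℝ≥0∞ :=
  ⨅ (ε : NNReal) (_ : Interleaved K Φ ε.coe_nonneg M N), (ε : ℝ≥0∞)

/-- An interval `I` is `t`-trivial if the transition morphism `C(I) → C(I(t))` vanishes. -/
noncomputable def IsTrivialIv (Φ : RFlow P) {t : ℝ} (ht : 0 ≤ t)
    (I : Set P) (hI : PosetConvex I) : Prop :=
  ∀ p : P, (charMod K I hI).map (homOfLE (Φ.self_le ht p)) = 0

/-- An `ε`-correspondence between two barcodes. -/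
noncomputable def IsCorrespondence (Φ : RFlow P) {ε : ℝ} (hε : 0 ≤ ε)
    (DM DN : Barcode P) (σ : Set (DM.ι × DN.ι)) : Prop :=
  (∀ ab ∈ σ, Interleaved K Φ hε
      (charMod K (DM.B ab.1) (DM.interval ab.1).1) (charMod K (DN.B ab.2) (DN.interval ab.2).1)) ∧
  (∀ a : DM.ι, (∀ b : DN.ι, (a, b) ∉ σ) →
      Interleaved K Φ hε (charMod K (DM.B a) (DM.interval a).1) (zeroPMod K)) ∧
  (∀ b : DN.ι, (∀ a : DM.ι, (a, b) ∉ σ) →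
      Interleaved K Φ hε (zeroPMod K) (charMod K (DN.B b) (DN.interval b).1))

/-- An `ε`-matching between two barcodes. -/
noncomputable def IsMatching (Φ : RFlow P) {ε : ℝ} (hε : 0 ≤ ε)
    (DM DN : Barcode P) (σ : Set (DM.ι × DN.ι)) : Prop :=
  IsCorrespondence K Φ hε DM DN σ ∧
  (∀ a b b', (a, b) ∈ σ → (a, b') ∈ σ → b = b') ∧
  (∀ a a' b, (a, b) ∈ σ → (a', b) ∈ σ → a = a')

/-- The Hausdorff distance between (modules with) barcodes `DM`, `DN`. -/
noncomputable def dH (Φ : RFlow P) (DM DN : Barcode P) : ℝ≥0∞ :=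
  ⨅ (ε : NNReal) (_ : ∃ σ : Set (DM.ι × DN.ι), IsCorrespondence K Φ ε.coe_nonneg DM DN σ),
    (ε : ℝ≥0∞)

/-- The bottleneck distance between (modules with) barcodes `DM`, `DN`. -/
noncomputable def dB (Φ : RFlow P) (DM DN : Barcode P) : ℝ≥0∞ :=
  ⨅ (ε : NNReal) (_ : ∃ σ : Set (DM.ι × DN.ι), IsMatching K Φ ε.coe_nonneg DM DN σ),
    (ε : ℝ≥0∞)

/-!
A morphism `f : C(I) → C(J)(ε)` acts at each point of `I ∩ J(ε)` as multiplication by a scalar,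
and naturality makes this scalar agree at comparable points, so it is constant on the interval
`I ∩ J(ε) ∈ F`; likewise for `g : C(J) → C(I)(ε)` on `J ∩ I(ε)`. A point `p` with `p` and
`Ω_{4ε} p` in `I` turns `g(ε) ∘ f = φ^{2ε}` into `d c = 1` for the two constants, so both are
nonzero. Nonzero scalars make `f` and `g` propagate the property `Ω_ε q ∈ I` along every
comparable pair of the interval `J ∩ J(2ε)`, starting from `Ω_ε p`; hence on `J ∩ J(2ε)` the
composite `f(ε) ∘ g` is multiplication by `c d = 1`, and off it its target vanishes.
-/

theorem PosetConnected.induction {S : Set P} (hS : PosetConnected S) {Q : P → Prop}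
    (hQ : ∀ a ∈ S, ∀ b ∈ S, a ≤ b → (Q a ↔ Q b)) {p q : P} (hp : p ∈ S) (hq : q ∈ S)
    (hQp : Q p) : Q q := by
  have hpq := hS p hp q hq
  clear hq
  suffices h : q ∈ S ∧ Q q from h.2
  induction hpq with
  | refl => exact ⟨hp, hQp⟩
  | tail _ hbc ih =>
    obtain ⟨ha, hQa⟩ := ih
    obtain ⟨hb, hab | hba⟩ := hbc
    · exact ⟨hb, (hQ _ ha _ hb hab).1 hQa⟩
    · exact ⟨hb, (hQ _ hb _ ha hba).2 hQa⟩

lemma RFlow.shiftSet_eq_image_neg (Φ : RFlow P) (S : Set P) (t : ℝ) :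
    Φ.shiftSet S t = Φ.Ω (-t) '' S := by
  ext x
  constructor
  · intro hx
    exact ⟨Φ.Ω t x, hx, Φ.omega_neg_omega t x⟩
  · rintro ⟨y, hy, rfl⟩
    show Φ.Ω t (Φ.Ω (-t) y) ∈ S
    rwa [Φ.omega_omega_neg]

lemma RFlow.mem_shiftSet_add_iff (Φ : RFlow P) {S : Set P} {s t : ℝ} {x : P} :
    x ∈ Φ.shiftSet S (s + t) ↔ Φ.Ω s (Φ.Ω t x) ∈ S := by
  show Φ.Ω (s + t) x ∈ S ↔ _
  rw [Φ.add]

lemma PosetConvex.flow_mem {A : Set P} (hA : PosetConvex A) (Φ : RFlow P) {p : P} {s t : ℝ}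
    (ht : 0 ≤ t) (hts : t ≤ s) (hp : p ∈ A) (hs : Φ.Ω s p ∈ A) : Φ.Ω t p ∈ A :=
  hA hp hs (Φ.self_le ht p) (Φ.mono_param hts p)

lemma coe_charSub_eq_zero {I : Set P} {p : P} (hp : p ∉ I) (x : ↥(charSub K I p)) :
    (x : K) = 0 :=
  congrArg Subtype.val (charElt_eq_zero K hp x)

lemma coe_charMap {I : Set P} {p q : P} (hq : q ∈ I) (x : ↥(charSub K I p)) :
    (charMap K I p q x : K) = x := by
  by_cases hp : p ∈ I
  · simp [charMap, dif_pos (And.intro hp hq)]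
  · rw [charElt_eq_zero K hp x, map_zero]
    rfl

lemma exists_mem_of_not_isTrivialIv (Φ : RFlow P) {t : ℝ} (ht : 0 ≤ t) {I : Set P}
    {hI : PosetConvex I} (h : ¬ IsTrivialIv K Φ ht I hI) : ∃ p ∈ I, Φ.Ω t p ∈ I := by
  contrapose! h
  intro p
  show ModuleCat.ofHom (charMap K I p (Φ.Ω t p)) = 0
  rw [charMap, dif_neg (fun hp => h p hp.1 hp.2)]
  rfl

def charOne {I : Set P} {p : P} (hp : p ∈ I) : ↥(charSub K I p) :=
  ⟨1, by rw [charSub_eq_top K hp]; exact Submodule.mem_top⟩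

section Coefficient

variable {K} (Φ : RFlow P) {ε : ℝ} {A B : Set P} {hA : PosetConvex A} {hB : PosetConvex B}

noncomputable def fibreMap (f : charMod K A hA ⟶ Pshift K Φ ε (charMod K B hB)) (p : P) :
    ↥(charSub K A p) →ₗ[K] ↥(charSub K B (Φ.Ω ε p)) :=
  (f.app p).hom

/-- A morphism `C(A) → C(B)(ε)` acts at `p` as multiplication by `coeff f p`,
set to `0` off `A`. -/
noncomputable def coeff (f : charMod K A hA ⟶ Pshift K Φ ε (charMod K B hB)) (p : P) : K :=
  if hp : p ∈ A then (fibreMap Φ f p (charOne K hp) : K) else 0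

variable {Φ} (f : charMod K A hA ⟶ Pshift K Φ ε (charMod K B hB))

lemma fibreMap_comp_charMap {p q : P} (hpq : p ≤ q) :
    fibreMap Φ f q ∘ₗ charMap K A p q = charMap K B (Φ.Ω ε p) (Φ.Ω ε q) ∘ₗ fibreMap Φ f p :=
  congrArg ModuleCat.Hom.hom (f.naturality (homOfLE hpq))

lemma coe_fibreMap (p : P) (x : ↥(charSub K A p)) :
    (fibreMap Φ f p x : K) = coeff Φ f p * x := by
  by_cases hp : p ∈ A
  · have hx : x = (x : K) • charOne K hp := Subtype.ext (mul_one (x : K)).symm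
    rw [coeff, dif_pos hp]
    nth_rewrite 1 [hx]
    rw [map_smul, Submodule.coe_smul, smul_eq_mul, mul_comm]
  · rw [charElt_eq_zero K hp x, map_zero]
    simp

lemma coeff_of_notMem {p : P} (hp : p ∉ A) : coeff Φ f p = 0 := dif_neg hp

lemma mem_of_coeff_ne_zero {p : P} (h : coeff Φ f p ≠ 0) : p ∈ A ∧ Φ.Ω ε p ∈ B := by
  by_contra hp
  apply h
  by_cases hpA : p ∈ A
  · rw [coeff, dif_pos hpA]
    exact coe_charSub_eq_zero K (fun h' => hp ⟨hpA, h'⟩) _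
  · exact coeff_of_notMem f hpA

lemma coeff_eq_coeff_of_le {p q : P} (hpq : p ≤ q) (hp : p ∈ A) (hq : Φ.Ω ε q ∈ B) :
    coeff Φ f q = coeff Φ f p := by
  have hnat : coeff Φ f q * (charMap K A p q (charOne K hp) : K) = coeff Φ f p := by
    have h := congrArg (fun φ => (φ (charOne K hp) : K)) (fibreMap_comp_charMap f hpq)
    simp only [LinearMap.comp_apply, coe_fibreMap, coe_charMap K hq] at h
    simpa [charOne] using h
  by_cases hqA : q ∈ A
  · rwa [coe_charMap K hqA, charOne, mul_one] at hnat
  · rw [coe_charSub_eq_zero K hqA, mul_zero] at hnat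
    rw [← hnat, coeff_of_notMem f hqA]

lemma coeff_eq_of_posetConnected (hU : PosetConnected (A ∩ Φ.shiftSet B ε)) {p q : P}
    (hp : p ∈ A ∩ Φ.shiftSet B ε) (hq : q ∈ A ∩ Φ.shiftSet B ε) : coeff Φ f q = coeff Φ f p :=
  hU.induction (Q := fun x => coeff Φ f x = coeff Φ f p)
    (fun a ha b hb hab => by rw [coeff_eq_coeff_of_le f hab ha.1 hb.2]) hp hq rfl

variable (g : charMod K B hB ⟶ Pshift K Φ ε (charMod K A hA))

lemma comp_app_eq_map_iff (hε : 0 ≤ ε) (q : P) :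
    f.app q ≫ g.app (Φ.Ω ε q) = (charMod K A hA).map (homOfLE (Φ.self_le_twice hε q)) ↔
      (q ∈ A → Φ.Ω ε (Φ.Ω ε q) ∈ A → coeff Φ g (Φ.Ω ε q) * coeff Φ f q = 1) := by
  refine ModuleCat.hom_ext_iff.trans ?_
  change fibreMap Φ g (Φ.Ω ε q) ∘ₗ fibreMap Φ f q = charMap K A q (Φ.Ω ε (Φ.Ω ε q)) ↔ _
  constructor
  · intro h hq hq2
    have h1 := congrArg (fun φ => (φ (charOne K hq) : K)) h
    simp only [LinearMap.comp_apply, coe_fibreMap, coe_charMap K hq2, charOne, mul_one] at h1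
    exact h1
  · intro h
    refine LinearMap.ext fun x => Subtype.ext ?_
    rw [LinearMap.comp_apply]
    by_cases hq2 : Φ.Ω ε (Φ.Ω ε q) ∈ A
    · by_cases hq : q ∈ A
      · rw [coe_fibreMap, coe_fibreMap, coe_charMap K hq2, ← mul_assoc, h hq hq2, one_mul]
      · rw [charElt_eq_zero K hq x, map_zero, map_zero, map_zero]
    · rw [coe_charSub_eq_zero K hq2, coe_charSub_eq_zero K hq2]

lemma shift_mem_of_posetConnected (hW : PosetConnected (B ∩ Φ.shiftSet B (ε + ε)))
    (hf : ∀ x ∈ A ∩ Φ.shiftSet B ε, coeff Φ f x ≠ 0)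
    (hg : ∀ y ∈ B ∩ Φ.shiftSet A ε, coeff Φ g y ≠ 0) {q₀ q : P}
    (hq₀ : q₀ ∈ B ∩ Φ.shiftSet B (ε + ε)) (hq₀A : Φ.Ω ε q₀ ∈ A)
    (hq : q ∈ B ∩ Φ.shiftSet B (ε + ε)) : Φ.Ω ε q ∈ A := by
  refine hW.induction (Q := fun x => Φ.Ω ε x ∈ A)
    (fun a ha b hb hab => ⟨fun haA => ?_, fun hbA => ?_⟩) hq₀ hq hq₀A
  · have hbB : Φ.Ω ε (Φ.Ω ε b) ∈ B := Φ.mem_shiftSet_add_iff.1 hb.2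
    have hne := hf _ ⟨haA, Φ.mem_shiftSet_add_iff.1 ha.2⟩
    rw [← coeff_eq_coeff_of_le f (Φ.mono ε hab) haA hbB] at hne
    exact (mem_of_coeff_ne_zero f hne).1
  · have hne := hg b ⟨hb.1, hbA⟩
    rw [coeff_eq_coeff_of_le g hab ha.1 hbA] at hne
    exact (mem_of_coeff_ne_zero g hne).2

lemma comp_app_eq_map_of_left_of_significant (hε : 0 ≤ ε)
    (hfg : ∀ p : P, f.app p ≫ g.app (Φ.Ω ε p) =
      (charMod K A hA).map (homOfLE (Φ.self_le_twice hε p)))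
    (hU : PosetConnected (A ∩ Φ.shiftSet B ε)) (hV : PosetConnected (B ∩ Φ.shiftSet A ε))
    (hW : PosetConnected (B ∩ Φ.shiftSet B (ε + ε))) {p : P} (hp : p ∈ A)
    (hp4 : Φ.Ω (4 * ε) p ∈ A) (q : P) :
    g.app q ≫ f.app (Φ.Ω ε q) = (charMod K B hB).map (homOfLE (Φ.self_le_twice hε q)) := by
  have hunit := fun x => (comp_app_eq_map_iff f g hε x).1 (hfg x)
  have hp2 : Φ.Ω ε (Φ.Ω ε p) ∈ A := by
    rw [← Φ.add]
    exact hA.flow_mem Φ (by linarith) (by linarith) hp hp4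
  have hp4' : Φ.Ω ε (Φ.Ω ε (Φ.Ω ε (Φ.Ω ε p))) ∈ A := by
    rwa [← Φ.add, ← Φ.add, ← Φ.add, show ε + ε + ε + ε = 4 * ε by ring]
  have hgf : coeff Φ g (Φ.Ω ε p) * coeff Φ f p = 1 := hunit p hp hp2
  have hp1 : Φ.Ω ε p ∈ B := (mem_of_coeff_ne_zero f (right_ne_zero_of_mul_eq_one hgf)).2
  have hp3 : Φ.Ω ε (Φ.Ω ε (Φ.Ω ε p)) ∈ B :=
    (mem_of_coeff_ne_zero f (right_ne_zero_of_mul_eq_one (hunit _ hp2 hp4'))).2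
  have hf : ∀ x ∈ A ∩ Φ.shiftSet B ε, coeff Φ f x = coeff Φ f p :=
    fun x hx => coeff_eq_of_posetConnected f hU ⟨hp, hp1⟩ hx
  have hg : ∀ y ∈ B ∩ Φ.shiftSet A ε, coeff Φ g y = coeff Φ g (Φ.Ω ε p) :=
    fun y hy => coeff_eq_of_posetConnected g hV ⟨hp1, hp2⟩ hy
  rw [comp_app_eq_map_iff g f hε]
  intro hq hq2
  have hq1 : Φ.Ω ε q ∈ A :=
    shift_mem_of_posetConnected f g hW
      (fun x hx => hf x hx ▸ right_ne_zero_of_mul_eq_one hgf)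
      (fun y hy => hg y hy ▸ left_ne_zero_of_mul_eq_one hgf)
      ⟨hp1, Φ.mem_shiftSet_add_iff.2 hp3⟩ hp2 ⟨hq, Φ.mem_shiftSet_add_iff.2 hq2⟩
  rw [hf _ ⟨hq1, hq2⟩, hg q ⟨hq, hq1⟩, mul_comm, hgf]

end Coefficient

/-- if `I` is `4ε`-significant and `(C(I), C(J))` is left
`ε`-interleaved, then `C(I)` and `C(J)` are `ε`-interleaved. -/
theorem left_interleaved_implies_interleaved (Φ : RFlow P)
    (F : Set (Set P)) (hFiv : ∀ S ∈ F, IsInterval S)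
    (hFcap : ∀ S ∈ F, ∀ T ∈ F, S ∩ T ∈ F)
    (hFflow : ∀ S ∈ F, ∀ t : ℝ, Φ.Ω t '' S ∈ F)
    {ε : ℝ} (hε : 0 ≤ ε) (I J : Set P) (hIF : I ∈ F) (hJF : J ∈ F)
    (hIsig : ¬ IsTrivialIv K Φ (show (0:ℝ) ≤ 4 * ε by linarith) I (hFiv I hIF).1)
    (hleft : LeftInterleaved K Φ hε
      (charMod K I (hFiv I hIF).1) (charMod K J (hFiv J hJF).1)) :
    Interleaved K Φ hε (charMod K I (hFiv I hIF).1) (charMod K J (hFiv J hJF).1) := by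
  obtain ⟨f, g, hfg⟩ := hleft
  obtain ⟨p, hp, hp4⟩ := exists_mem_of_not_isTrivialIv K Φ _ hIsig
  have hF : ∀ S ∈ F, ∀ T ∈ F, ∀ t : ℝ, PosetConnected (S ∩ Φ.shiftSet T t) :=
    fun S hS T hT t => (hFiv _ (hFcap S hS _
      (Φ.shiftSet_eq_image_neg T t ▸ hFflow T hT (-t)))).2
  exact ⟨f, g, hfg, comp_app_eq_map_of_left_of_significant f g hε hfg (hF I hIF J hJF ε)
    (hF J hJF I hIF ε) (hF J hJF J hJF (ε + ε)) hp hp4⟩
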